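/- Let e, f ∈ ℝ⁴ and let M be the 4×4 matrix with M_{ij} = 1/4 + e_i·f_j, and suppose every entry of M is strictly positive. If e_1 > e_3 and f_1 < f_3, then the matrix M' obtained from M by swapping columns 1 and 3 satisfies ∏_{i=1}^4 (M'_{ii})^4 · ∏_{i≠j} (M'_{ij})^2 > ∏_{i=1}^4 (M_{ii})^4 · ∏_{i≠j} (M_{ij})^2; since M and M' have the same total sum of entries, consequently L(M') > L(M). -/

import Mathlib

open Finset

/-- The numerator of the likelihood of the 100 Swiss Francs data table:
diagonal counts 4, off-diagonal counts 2. -/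
noncomputable def swissNum (M : Matrix (Fin 4) (Fin 4) ℝ) : ℝ :=
  ∏ i : Fin 4, ∏ j : Fin 4, M i j ^ (if i = j then 4 else 2)

/-- The likelihood of the 100 Swiss Francs data table. -/
noncomputable def swissL (M : Matrix (Fin 4) (Fin 4) ℝ) : ℝ :=
  swissNum M / (∑ i : Fin 4, ∑ j : Fin 4, M i j) ^ 40

/-!
For `M i j = c + e i * f j` with `c > 0`, the 2×2 minor on rows and columns `a, b` is
`M a a * M b b - M a b * M b a = c * (e a - e b) * (f a - f b)`, negative when `e` and `f`
are oppositely ordered on `a, b`. Swapping columns `a` and `b` exchanges the entries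
`M a a, M b b` (exponent 4) with `M a b, M b a` (exponent 2) and permutes the rest of the
table, so it multiplies the numerator of the likelihood by `(M a b * M b a / (M a a * M b b))^2 > 1`,
while the total sum of entries is unchanged.
-/

theorem swissNum_pos {M : Matrix (Fin 4) (Fin 4) ℝ} (hM : ∀ i j, 0 < M i j) :
    0 < swissNum M :=
  prod_pos fun i _ => prod_pos fun j _ => pow_pos (hM i j) _

theorem swissNum_mul_of_swap_cols {M M' : Matrix (Fin 4) (Fin 4) ℝ}
    (hM' : ∀ i j, M' i j = M i (Equiv.swap (0 : Fin 4) 2 j)) :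
    swissNum M' * (M 0 0 * M 2 2) ^ 2 = swissNum M * (M 0 2 * M 2 0) ^ 2 := by
  have h0 : Equiv.swap (0 : Fin 4) 2 0 = 2 := rfl
  have h1 : Equiv.swap (0 : Fin 4) 2 1 = 1 := rfl
  have h2 : Equiv.swap (0 : Fin 4) 2 2 = 0 := rfl
  have h3 : Equiv.swap (0 : Fin 4) 2 3 = 3 := rfl
  simp only [swissNum, Fin.prod_univ_four, hM', h0, h1, h2, h3, reduceIte, Fin.reduceEq]
  ring

theorem mul_diag_lt_mul_antidiag_of_rankOne_add {ι : Type*} {c : ℝ} {e f : ι → ℝ}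
    {M : Matrix ι ι ℝ} (hc : 0 < c) (hM : ∀ i j, M i j = c + e i * f j) {a b : ι}
    (he : e b < e a) (hf : f a < f b) :
    M a a * M b b < M a b * M b a := by
  have hminor : M a a * M b b - M a b * M b a = c * ((e a - e b) * (f a - f b)) := by
    simp only [hM]; ring
  have : c * ((e a - e b) * (f a - f b)) < 0 :=
    mul_neg_of_pos_of_neg hc (mul_neg_of_pos_of_neg (sub_pos.2 he) (sub_neg.2 hf))
  linarith

theorem sum_sum_eq_of_perm_cols {n : Type*} [Fintype n] {M M' : Matrix n n ℝ}
    (σ : Equiv.Perm n) (hM' : ∀ i j, M' i j = M i (σ j)) :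
    ∑ i, ∑ j, M' i j = ∑ i, ∑ j, M i j := by
  simp only [hM', Equiv.sum_comp]

theorem swissL_lt_swissL {M M' : Matrix (Fin 4) (Fin 4) ℝ} (hM : ∀ i j, 0 < M i j)
    (hsum : ∑ i, ∑ j, M' i j = ∑ i, ∑ j, M i j) (hnum : swissNum M < swissNum M') :
    swissL M < swissL M' := by
  have hS : 0 < ∑ i, ∑ j, M i j :=
    sum_pos (fun i _ => sum_pos (fun j _ => hM i j) univ_nonempty) univ_nonempty
  rw [swissL, swissL, hsum]
  exact div_lt_div_of_pos_right hnum (pow_pos hS 40)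

theorem column_swap_increases_likelihood
    (e f : Fin 4 → ℝ)
    (M : Matrix (Fin 4) (Fin 4) ℝ)
    (hM : ∀ i j, M i j = 1/4 + e i * f j)
    (hpos : ∀ i j, 0 < M i j)
    (he : e 0 > e 2) (hf : f 0 < f 2)
    (M' : Matrix (Fin 4) (Fin 4) ℝ)
    (hM' : ∀ i j, M' i j = M i (Equiv.swap (0 : Fin 4) 2 j)) :
    swissNum M' > swissNum M ∧ swissL M' > swissL M := by
  have hminor : M 0 0 * M 2 2 < M 0 2 * M 2 0 :=
    mul_diag_lt_mul_antidiag_of_rankOne_add (by norm_num) hM he hf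
  have hdiag : 0 < M 0 0 * M 2 2 := mul_pos (hpos 0 0) (hpos 2 2)
  have hnum : swissNum M < swissNum M' := by
    have : swissNum M * (M 0 0 * M 2 2) ^ 2 < swissNum M' * (M 0 0 * M 2 2) ^ 2 := by
      rw [swissNum_mul_of_swap_cols hM']
      exact mul_lt_mul_of_pos_left (pow_lt_pow_left₀ hminor hdiag.le two_ne_zero)
        (swissNum_pos hpos)
    exact lt_of_mul_lt_mul_right this (by positivity)
  exact ⟨hnum, swissL_lt_swissL hpos (sum_sum_eq_of_perm_cols _ hM') hnum⟩
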